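/- arXiv:0810.4496 — 7 statements merged into one kernel-verified Lean document; each statement's English description precedes it below -/
import Mathlib

section
/- The measurable subsets form a Boolean ring on which the measure is additive: if A, B ⊆ X are measurable, then A ∪ B, A ∩ B and A \ B are measurable; and if in addition A and B are disjoint, then μ(A ∪ B) = μ(A) + μ(B). -/
open Filter Topology

/-- A series `Σ_{i∈ℕ} x i` converges to `s` if its partial sums `Σ_{i=0}^{N} x i`
converge to `s` as `N → ∞`. -/
def SeriesConvTo {G : Type*} [AddCommMonoid G] [TopologicalSpace G]
    (x : ℕ → G) (s : G) : Prop :=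
  Tendsto (fun N => ∑ i ∈ Finset.range (N + 1), x i) atTop (𝓝 s)

/-- `A ⊆ X` is measurable (w.r.t. the collection `S` of stable sets and the
additive measure `μ`) if for every `m` there are a stable set `Am m` and a
sequence of stable sets `C m i` with `Σ_i μ (C m i)` convergent (to `s m`),
`A △ Am m ⊆ ⋃ i, C m i`, and `s m → 0` as `m → ∞`. -/
def RMeasurable {G : Type*} [AddCommMonoid G] [TopologicalSpace G] {X : Type*}
    (S : Set (Set X)) (μ : Set X → G) (A : Set X) : Prop :=
  ∃ (Am : ℕ → Set X) (C : ℕ → ℕ → Set X) (s : ℕ → G),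
    (∀ m, Am m ∈ S) ∧ (∀ m i, C m i ∈ S) ∧
    (∀ m, SeriesConvTo (fun i => μ (C m i)) (s m)) ∧
    (∀ m, symmDiff A (Am m) ⊆ ⋃ i, C m i) ∧
    Tendsto s atTop (𝓝 0)

/-- `A ⊆ X` is measurable with measure value `L`, i.e. measurable with witnesses
`Am` such that `μ (Am m) → L`. -/
def RMeasureVal {G : Type*} [AddCommMonoid G] [TopologicalSpace G] {X : Type*}
    (S : Set (Set X)) (μ : Set X → G) (A : Set X) (L : G) : Prop :=
  ∃ (Am : ℕ → Set X) (C : ℕ → ℕ → Set X) (s : ℕ → G),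
    (∀ m, Am m ∈ S) ∧ (∀ m i, C m i ∈ S) ∧
    (∀ m, SeriesConvTo (fun i => μ (C m i)) (s m)) ∧
    (∀ m, symmDiff A (Am m) ⊆ ⋃ i, C m i) ∧
    Tendsto s atTop (𝓝 0) ∧
    Tendsto (fun m => μ (Am m)) atTop (𝓝 L)

/-!
Each of `∪`, `∩`, `\` satisfies `(P ⋆ Q) ∆ (P' ⋆ Q') ⊆ P ∆ P' ∪ Q ∆ Q'`, so applying it to
approximations `Am m`, `Bm m` of `A`, `B` approximates `A ⋆ B`, with the error covered by the
interleaving of the two error covers. For additivity,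
`μ (Am m ∪ Bm m) = μ (Am m) + μ (Bm m) - μ (Am m ∩ Bm m)`, and for disjoint `A`, `B` the set
`Am m ∩ Bm m` lies in the two error covers; a finite subcover bounds its measure by the sum of
the two error series, which tends to `0`.
-/

section Interleave

variable {α : Type*}

def interleave (a b : ℕ → α) (n : ℕ) : α := if Even n then a (n / 2) else b (n / 2)

@[simp]
lemma interleave_two_mul (a b : ℕ → α) (i : ℕ) : interleave a b (2 * i) = a i := by
  simp [interleave]

@[simp]
lemma interleave_two_mul_add_one (a b : ℕ → α) (i : ℕ) : interleave a b (2 * i + 1) = b i := by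
  simp [interleave, Nat.add_div_of_dvd_right]

lemma apply_interleave {β : Type*} (f : α → β) (a b : ℕ → α) (n : ℕ) :
    f (interleave a b n) = interleave (fun i => f (a i)) (fun i => f (b i)) n :=
  apply_ite f _ _ _

lemma forall_interleave {p : α → Prop} {a b : ℕ → α} (ha : ∀ i, p (a i)) (hb : ∀ i, p (b i))
    (n : ℕ) : p (interleave a b n) := by
  unfold interleave
  split_ifs
  exacts [ha _, hb _]

lemma iUnion_interleave {X : Type*} (a b : ℕ → Set X) :
    ⋃ n, interleave a b n = (⋃ i, a i) ∪ ⋃ i, b i := by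
  refine (Set.iUnion_subset fun n => ?_).antisymm
    (Set.union_subset (Set.iUnion_subset fun i => ?_) (Set.iUnion_subset fun i => ?_))
  · unfold interleave
    split_ifs
    exacts [Set.subset_union_of_subset_left (Set.subset_iUnion _ _) _,
      Set.subset_union_of_subset_right (Set.subset_iUnion _ _) _]
  · exact (interleave_two_mul a b i).symm.subset.trans (Set.subset_iUnion _ _)
  · exact (interleave_two_mul_add_one a b i).symm.subset.trans (Set.subset_iUnion _ _)

lemma sum_range_interleave {G : Type*} [AddCommMonoid G] (a b : ℕ → G) (M : ℕ) :
    ∑ i ∈ Finset.range M, interleave a b i =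
      ∑ i ∈ Finset.range ((M + 1) / 2), a i + ∑ i ∈ Finset.range (M / 2), b i := by
  induction M with
  | zero => simp
  | succ M ih =>
    rw [Finset.sum_range_succ, ih]
    rcases Nat.even_or_odd' M with ⟨k, rfl | rfl⟩
    · rw [show (2 * k + 1 + 1) / 2 = k + 1 by omega, show (2 * k + 1) / 2 = k by omega,
        show 2 * k / 2 = k by omega, interleave_two_mul, Finset.sum_range_succ]
      abel
    · rw [show (2 * k + 1 + 1 + 1) / 2 = k + 1 by omega, show (2 * k + 1 + 1) / 2 = k + 1 by omega,
        show (2 * k + 1) / 2 = k by omega, interleave_two_mul_add_one, Finset.sum_range_succ b]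
      abel

end Interleave

section Series

variable {G : Type*} [AddCommMonoid G] [TopologicalSpace G]

lemma seriesConvTo_iff {x : ℕ → G} {s : G} :
    SeriesConvTo x s ↔ Tendsto (fun N => ∑ i ∈ Finset.range N, x i) atTop (𝓝 s) :=
  tendsto_add_atTop_iff_nat (f := fun N => ∑ i ∈ Finset.range N, x i) 1

lemma SeriesConvTo.interleave [ContinuousAdd G] {x y : ℕ → G} {s t : G}
    (hx : SeriesConvTo x s) (hy : SeriesConvTo y t) : SeriesConvTo (interleave x y) (s + t) := by
  have half_tendsto (k : ℕ) : Tendsto (fun N : ℕ => (N + k) / 2) atTop atTop :=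
    tendsto_atTop_atTop.mpr fun n => ⟨2 * n, fun m hm => by omega⟩
  rw [seriesConvTo_iff] at hx hy ⊢
  simp_rw [sum_range_interleave]
  exact (hx.comp (half_tendsto 1)).add (hy.comp (half_tendsto 0))

lemma SeriesConvTo.map_interleave [ContinuousAdd G] {α : Type*} {f : α → G} {a b : ℕ → α}
    {s t : G} (ha : SeriesConvTo (fun i => f (a i)) s) (hb : SeriesConvTo (fun i => f (b i)) t) :
    SeriesConvTo (fun i => f (_root_.interleave a b i)) (s + t) := by
  simpa only [apply_interleave f] using ha.interleave hb

def IsSeqClosedOrder (G : Type*) [TopologicalSpace G] [LE G] : Prop :=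
  ∀ (u v : ℕ → G) (lu lv : G), (∀ n, u n ≤ v n) →
    Tendsto u atTop (𝓝 lu) → Tendsto v atTop (𝓝 lv) → lu ≤ lv

lemma SeriesConvTo.sum_le [PartialOrder G] [IsOrderedAddMonoid G] (hG : IsSeqClosedOrder G)
    {x : ℕ → G} {s : G} (hx : ∀ i, 0 ≤ x i) (h : SeriesConvTo x s) (F : Finset ℕ) :
    ∑ i ∈ F, x i ≤ s := by
  have sum_range_le (N : ℕ) : ∑ i ∈ Finset.range N, x i ≤ s :=
    hG (fun _ => ∑ i ∈ Finset.range N, x i) (fun n => ∑ i ∈ Finset.range (n + N), x i) _ s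
      (fun n => Finset.sum_le_sum_of_subset_of_nonneg (Finset.range_subset_range.mpr (by omega))
        fun i _ _ => hx i)
      tendsto_const_nhds ((tendsto_add_atTop_iff_nat N).mpr (seriesConvTo_iff.mp h))
  exact (Finset.sum_le_sum_of_subset_of_nonneg F.subset_range_sup_succ fun i _ _ => hx i).trans
    (sum_range_le _)

end Series

section Content

variable {G : Type*} [AddCommGroup G] [PartialOrder G] {X : Type*} {S : Set (Set X)} {μ : Set X → G}

def HasFiniteSubcovers (S : Set (Set X)) : Prop :=
  ∀ A ∈ S, ∀ C : ℕ → Set X, (∀ i, C i ∈ S) → A ⊆ ⋃ i, C i → ∃ F : Finset ℕ, A ⊆ ⋃ i ∈ F, C i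

structure IsAdditiveContent (S : Set (Set X)) (μ : Set X → G) : Prop where
  inter_mem : ∀ A B : Set X, A ∈ S → B ∈ S → A ∩ B ∈ S
  diff_mem : ∀ A B : Set X, A ∈ S → B ∈ S → A \ B ∈ S
  map_union : ∀ A B : Set X, A ∈ S → B ∈ S → Disjoint A B → μ (A ∪ B) = μ A + μ B
  nonneg : ∀ A : Set X, A ∈ S → 0 ≤ μ A

namespace IsAdditiveContent

variable (hμ : IsAdditiveContent S μ)
include hμ

lemma map_empty (h : ∅ ∈ S) : μ ∅ = 0 := by
  simpa using hμ.map_union ∅ ∅ h h (Set.disjoint_empty _)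

lemma map_eq_map_inter_add_map_diff {E F : Set X} (hE : E ∈ S) (hF : F ∈ S) :
    μ E = μ (E ∩ F) + μ (E \ F) := by
  rw [← hμ.map_union _ _ (hμ.inter_mem _ _ hE hF) (hμ.diff_mem _ _ hE hF)
    Set.disjoint_sdiff_inter.symm, Set.inter_union_sdiff]

lemma map_union_add_map_inter {E F : Set X} (hE : E ∈ S) (hF : F ∈ S) :
    μ (E ∪ F) + μ (E ∩ F) = μ E + μ F := by
  have hEF := hμ.map_union _ _ hE (hμ.diff_mem _ _ hF hE) Set.disjoint_sdiff_right
  rw [Set.union_sdiff_self] at hEF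
  rw [hEF, hμ.map_eq_map_inter_add_map_diff hF hE, Set.inter_comm]
  abel

variable [IsOrderedAddMonoid G]

lemma mono {E F : Set X} (hE : E ∈ S) (hF : F ∈ S) (hEF : E ⊆ F) : μ E ≤ μ F := by
  rw [hμ.map_eq_map_inter_add_map_diff hF hE, Set.inter_eq_self_of_subset_right hEF]
  exact le_add_of_nonneg_right (hμ.nonneg _ (hμ.diff_mem _ _ hF hE))

lemma le_sum_of_subset_biUnion {D : ℕ → Set X} (hD : ∀ i, D i ∈ S) (F : Finset ℕ) :
    ∀ {E : Set X}, E ∈ S → E ⊆ ⋃ i ∈ F, D i → μ E ≤ ∑ i ∈ F, μ (D i) := by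
  induction F using Finset.induction_on with
  | empty =>
    intro E hE hsub
    obtain rfl : E = ∅ := by simpa using hsub
    simp [hμ.map_empty hE]
  | insert j F hj ih =>
    intro E hE hsub
    have hdiff : E \ D j ⊆ ⋃ i ∈ F, D i := by
      rw [Finset.set_biUnion_insert] at hsub
      exact Set.sdiff_subset_iff.mpr hsub
    rw [Finset.sum_insert hj, hμ.map_eq_map_inter_add_map_diff hE (hD j)]
    exact add_le_add (hμ.mono (hμ.inter_mem _ _ hE (hD j)) (hD j) Set.inter_subset_right)
      (ih (hμ.diff_mem _ _ hE (hD j)) hdiff)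

variable [TopologicalSpace G]

lemma le_of_subset_iUnion (hG : IsSeqClosedOrder G)
    (hcompact : HasFiniteSubcovers S)
    {E : Set X} {C : ℕ → Set X} {s : G} (hE : E ∈ S) (hC : ∀ i, C i ∈ S)
    (hsub : E ⊆ ⋃ i, C i) (hs : SeriesConvTo (fun i => μ (C i)) s) : μ E ≤ s := by
  obtain ⟨F, hF⟩ := hcompact E hE C hC hsub
  exact (hμ.le_sum_of_subset_biUnion hC F hE hF).trans
    (hs.sum_le hG (fun i => hμ.nonneg _ (hC i)) F)

end IsAdditiveContent

end Content

section Approximation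

variable {G : Type*} [AddCommGroup G] [TopologicalSpace G] {X : Type*}
  {S : Set (Set X)} {μ : Set X → G}

structure IsApproximation (S : Set (Set X)) (μ : Set X → G) (A : Set X) (Am : ℕ → Set X)
    (C : ℕ → ℕ → Set X) (s : ℕ → G) : Prop where
  mem : ∀ m, Am m ∈ S
  cover_mem : ∀ m i, C m i ∈ S
  seriesConvTo : ∀ m, SeriesConvTo (fun i => μ (C m i)) (s m)
  symmDiff_subset : ∀ m, symmDiff A (Am m) ⊆ ⋃ i, C m i
  tendsto_zero : Tendsto s atTop (𝓝 0)

lemma rMeasurable_iff {A : Set X} :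
    RMeasurable S μ A ↔ ∃ Am C s, IsApproximation S μ A Am C s :=
  ⟨fun ⟨Am, C, s, h₁, h₂, h₃, h₄, h₅⟩ => ⟨Am, C, s, ⟨h₁, h₂, h₃, h₄, h₅⟩⟩,
    fun ⟨Am, C, s, ⟨h₁, h₂, h₃, h₄, h₅⟩⟩ => ⟨Am, C, s, h₁, h₂, h₃, h₄, h₅⟩⟩

lemma rMeasureVal_iff {A : Set X} {L : G} :
    RMeasureVal S μ A L ↔
      ∃ Am C s, IsApproximation S μ A Am C s ∧ Tendsto (fun m => μ (Am m)) atTop (𝓝 L) :=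
  ⟨fun ⟨Am, C, s, h₁, h₂, h₃, h₄, h₅, h₆⟩ => ⟨Am, C, s, ⟨h₁, h₂, h₃, h₄, h₅⟩, h₆⟩,
    fun ⟨Am, C, s, ⟨h₁, h₂, h₃, h₄, h₅⟩, h₆⟩ => ⟨Am, C, s, h₁, h₂, h₃, h₄, h₅, h₆⟩⟩

lemma Set.inter_symmDiff_inter_subset {s t u v : Set X} :
    symmDiff (s ∩ t) (u ∩ v) ⊆ symmDiff s u ∪ symmDiff t v := by
  grind

lemma Set.diff_symmDiff_diff_subset {s t u v : Set X} :
    symmDiff (s \ t) (u \ v) ⊆ symmDiff s u ∪ symmDiff t v := by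
  grind

variable [IsTopologicalAddGroup G]

lemma IsApproximation.op {op : Set X → Set X → Set X}
    (hop_mem : ∀ P Q : Set X, P ∈ S → Q ∈ S → op P Q ∈ S)
    (hop_symmDiff : ∀ P P' Q Q' : Set X,
      symmDiff (op P Q) (op P' Q') ⊆ symmDiff P P' ∪ symmDiff Q Q')
    {A B : Set X} {Am Bm : ℕ → Set X} {C D : ℕ → ℕ → Set X} {s t : ℕ → G}
    (hA : IsApproximation S μ A Am C s) (hB : IsApproximation S μ B Bm D t) :
    IsApproximation S μ (op A B) (fun m => op (Am m) (Bm m))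
      (fun m => interleave (C m) (D m)) (fun m => s m + t m) where
  mem m := hop_mem _ _ (hA.mem m) (hB.mem m)
  cover_mem m := forall_interleave (hA.cover_mem m) (hB.cover_mem m)
  seriesConvTo m := (hA.seriesConvTo m).map_interleave (hB.seriesConvTo m)
  symmDiff_subset m := by
    rw [iUnion_interleave]
    exact (hop_symmDiff ..).trans (Set.union_subset_union (hA.symmDiff_subset m)
      (hB.symmDiff_subset m))
  tendsto_zero := by simpa using hA.tendsto_zero.add hB.tendsto_zero

lemma RMeasurable.op {op : Set X → Set X → Set X}
    (hop_mem : ∀ P Q : Set X, P ∈ S → Q ∈ S → op P Q ∈ S)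
    (hop_symmDiff : ∀ P P' Q Q' : Set X,
      symmDiff (op P Q) (op P' Q') ⊆ symmDiff P P' ∪ symmDiff Q Q')
    {A B : Set X} (hA : RMeasurable S μ A) (hB : RMeasurable S μ B) :
    RMeasurable S μ (op A B) := by
  obtain ⟨Am, C, s, hA⟩ := rMeasurable_iff.mp hA
  obtain ⟨Bm, D, t, hB⟩ := rMeasurable_iff.mp hB
  exact rMeasurable_iff.mpr ⟨_, _, _, hA.op hop_mem hop_symmDiff hB⟩

variable [PartialOrder G] [IsOrderedAddMonoid G]

lemma IsApproximation.map_inter_le (hμ : IsAdditiveContent S μ) (hG : IsSeqClosedOrder G)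
    (hcompact : HasFiniteSubcovers S)
    {A B : Set X} {Am Bm : ℕ → Set X} {C D : ℕ → ℕ → Set X} {s t : ℕ → G}
    (hA : IsApproximation S μ A Am C s) (hB : IsApproximation S μ B Bm D t)
    (hAB : Disjoint A B) (m : ℕ) : μ (Am m ∩ Bm m) ≤ s m + t m := by
  have hsub : Am m ∩ Bm m ⊆ ⋃ i, interleave (C m) (D m) i := by
    rw [iUnion_interleave]
    refine fun x hx => Set.union_subset_union (hA.symmDiff_subset m) (hB.symmDiff_subset m) ?_
    by_cases hxA : x ∈ A
    · exact .inr (Set.mem_symmDiff.mpr (.inr ⟨hx.2, Set.disjoint_left.mp hAB hxA⟩))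
    · exact .inl (Set.mem_symmDiff.mpr (.inr ⟨hx.1, hxA⟩))
  exact hμ.le_of_subset_iUnion hG hcompact (hμ.inter_mem _ _ (hA.mem m) (hB.mem m))
    (forall_interleave (hA.cover_mem m) (hB.cover_mem m)) hsub
    ((hA.seriesConvTo m).map_interleave (hB.seriesConvTo m))

lemma RMeasureVal.union (hμ : IsAdditiveContent S μ) (hG : IsSeqClosedOrder G)
    (hsqueeze : ∀ (u v w : ℕ → G), (∀ n, u n ≤ v n) → (∀ n, v n ≤ w n) →
      Tendsto u atTop (𝓝 (0 : G)) → Tendsto w atTop (𝓝 (0 : G)) →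
      Tendsto v atTop (𝓝 (0 : G)))
    (hcompact : HasFiniteSubcovers S)
    (hunion : ∀ A B : Set X, A ∈ S → B ∈ S → A ∪ B ∈ S)
    {A B : Set X} {LA LB : G} (hAB : Disjoint A B)
    (hA : RMeasureVal S μ A LA) (hB : RMeasureVal S μ B LB) :
    RMeasureVal S μ (A ∪ B) (LA + LB) := by
  obtain ⟨Am, C, s, hA, hLA⟩ := rMeasureVal_iff.mp hA
  obtain ⟨Bm, D, t, hB, hLB⟩ := rMeasureVal_iff.mp hB
  have inter_tendsto : Tendsto (fun m => μ (Am m ∩ Bm m)) atTop (𝓝 0) :=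
    hsqueeze (fun _ => 0) _ (fun m => s m + t m)
      (fun m => hμ.nonneg _ (hμ.inter_mem _ _ (hA.mem m) (hB.mem m)))
      (hA.map_inter_le hμ hG hcompact hB hAB) tendsto_const_nhds
      (by simpa using hA.tendsto_zero.add hB.tendsto_zero)
  have union_eq (m : ℕ) : μ (Am m ∪ Bm m) = μ (Am m) + μ (Bm m) - μ (Am m ∩ Bm m) :=
    eq_sub_of_add_eq (hμ.map_union_add_map_inter (hA.mem m) (hB.mem m))
  refine rMeasureVal_iff.mpr
    ⟨_, _, _, hA.op hunion (fun _ _ _ _ => Set.union_symmDiff_union_subset) hB, ?_⟩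
  simp_rw [union_eq]
  simpa using (hLA.add hLB).sub inter_tendsto

end Approximation

theorem measurable_boolean_ring_general {G : Type*} [AddCommGroup G] [UniformSpace G]
    [IsUniformAddGroup G] [PartialOrder G]
    {X : Type*}
    (hadd : ∀ a b c : G, a ≤ b → a + c ≤ b + c)
    (hclosed : ∀ (u v : ℕ → G) (lu lv : G), (∀ n, u n ≤ v n) →
      Tendsto u atTop (𝓝 lu) → Tendsto v atTop (𝓝 lv) → lu ≤ lv)
    (hsqueeze : ∀ (u v w : ℕ → G), (∀ n, u n ≤ v n) → (∀ n, v n ≤ w n) →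
      Tendsto u atTop (𝓝 (0 : G)) → Tendsto w atTop (𝓝 (0 : G)) →
      Tendsto v atTop (𝓝 (0 : G)))
    (S : Set (Set X)) (μ : Set X → G)
    (hunion : ∀ A B : Set X, A ∈ S → B ∈ S → A ∪ B ∈ S)
    (hinter : ∀ A B : Set X, A ∈ S → B ∈ S → A ∩ B ∈ S)
    (hdiff : ∀ A B : Set X, A ∈ S → B ∈ S → A \ B ∈ S)
    (hsubcover : ∀ A : Set X, A ∈ S → ∀ C : ℕ → Set X, (∀ i, C i ∈ S) →
      A ⊆ ⋃ i, C i → ∃ F : Finset ℕ, A ⊆ ⋃ i ∈ F, C i)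
    (hμadd : ∀ A B : Set X, A ∈ S → B ∈ S → Disjoint A B → μ (A ∪ B) = μ A + μ B)
    (hμpos : ∀ A : Set X, A ∈ S → 0 ≤ μ A)
    (A B : Set X) (hA : RMeasurable S μ A) (hB : RMeasurable S μ B) :
    RMeasurable S μ (A ∪ B) ∧ RMeasurable S μ (A ∩ B) ∧ RMeasurable S μ (A \ B) ∧
    (∀ LA LB : G, Disjoint A B → RMeasureVal S μ A LA → RMeasureVal S μ B LB →
      RMeasureVal S μ (A ∪ B) (LA + LB)) := by
  have : IsOrderedAddMonoid G := { add_le_add_left := fun a b h c => hadd a b c h }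
  have hμ : IsAdditiveContent S μ := ⟨hinter, hdiff, hμadd, hμpos⟩
  exact ⟨hA.op hunion (fun _ _ _ _ => Set.union_symmDiff_union_subset) hB,
    hA.op hinter (fun _ _ _ _ => Set.inter_symmDiff_inter_subset) hB,
    hA.op hdiff (fun _ _ _ _ => Set.diff_symmDiff_diff_subset) hB,
    fun _ _ hAB hA hB => RMeasureVal.union hμ hclosed hsqueeze hsubcover hunion hAB hA hB⟩

/-- The measurable subsets form a Boolean ring on which the extended measure is
additive: unions, intersections and differences of measurable sets are
measurable, and the measure is additive on disjoint measurable sets. -/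
theorem measurable_boolean_ring {G : Type*} [AddCommGroup G] [UniformSpace G]
    [IsUniformAddGroup G] [CompleteSpace G] [T2Space G] [PartialOrder G]
    {X : Type*}
    (hadd : ∀ a b c : G, a ≤ b → a + c ≤ b + c)
    (hclosed : ∀ (u v : ℕ → G) (lu lv : G), (∀ n, u n ≤ v n) →
      Tendsto u atTop (𝓝 lu) → Tendsto v atTop (𝓝 lv) → lu ≤ lv)
    (hsqueeze : ∀ (u v w : ℕ → G), (∀ n, u n ≤ v n) → (∀ n, v n ≤ w n) →
      Tendsto u atTop (𝓝 (0 : G)) → Tendsto w atTop (𝓝 (0 : G)) →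
      Tendsto v atTop (𝓝 (0 : G)))
    (S : Set (Set X)) (μ : Set X → G)
    (hempty : ∅ ∈ S)
    (hunion : ∀ A B : Set X, A ∈ S → B ∈ S → A ∪ B ∈ S)
    (hinter : ∀ A B : Set X, A ∈ S → B ∈ S → A ∩ B ∈ S)
    (hdiff : ∀ A B : Set X, A ∈ S → B ∈ S → A \ B ∈ S)
    (hsubcover : ∀ A : Set X, A ∈ S → ∀ C : ℕ → Set X, (∀ i, C i ∈ S) →
      A ⊆ ⋃ i, C i → ∃ F : Finset ℕ, A ⊆ ⋃ i ∈ F, C i)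
    (hμadd : ∀ A B : Set X, A ∈ S → B ∈ S → Disjoint A B → μ (A ∪ B) = μ A + μ B)
    (hμpos : ∀ A : Set X, A ∈ S → 0 ≤ μ A)
    (A B : Set X) (hA : RMeasurable S μ A) (hB : RMeasurable S μ B) :
    RMeasurable S μ (A ∪ B) ∧ RMeasurable S μ (A ∩ B) ∧ RMeasurable S μ (A \ B) ∧
    (∀ LA LB : G, Disjoint A B → RMeasureVal S μ A LA → RMeasureVal S μ B LB →
      RMeasureVal S μ (A ∪ B) (LA + LB)) :=
  measurable_boolean_ring_general hadd hclosed hsqueeze S μ hunion hinter hdiff hsubcover hμadd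
    hμpos A B hA hB
end

section
/- Countable unions of stable sets are measurable (Proposition 5 of the paper): Let A = ∪_{i∈ℕ} A_i where each A_i ∈ 𝒮 and the series Σ_{i∈ℕ} μ(A_i) is convergent. Then A is measurable and μ(A) = lim_{n→∞} μ(∪_{i≤n} A_i). If furthermore the A_i are pairwise disjoint, then μ(A) = Σ_{i∈ℕ} μ(A_i). -/
/-!
Write `B n = ⋃_{i ≤ n} A i` and `q n = Σ_{i ≤ n} μ (A i)`. Finite additivity gives
`μ (B (n+1)) = μ (B n) + μ (A (n+1) \ B n)` with `0 ≤ μ (A (n+1) \ B n) ≤ μ (A (n+1))`, so both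
`μ ∘ B` and `q - μ ∘ B` increase. Hence `0 ≤ μ (B m) - μ (B n) ≤ q m - q n` for `n ≤ m`, and the
squeeze property turns convergence of `q` into the Cauchy property of `μ ∘ B`. The set `B m`
differs from `⋃ i, A i` only inside the tail `⋃_{i > m} A i`, whose series sums to `s - q m → 0`;
for disjoint `A i` one has `μ ∘ B = q`.
-/

open Filter Topology

theorem cauchySeq_of_tendsto_sub_of_le {G : Type*} [AddCommGroup G] [UniformSpace G]
    [IsUniformAddGroup G] {p : ℕ → G}
    (h : ∀ a b : ℕ → ℕ, Tendsto a atTop atTop → a ≤ b →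
      Tendsto (fun j => p (b j) - p (a j)) atTop (𝓝 0)) :
    CauchySeq p := by
  rw [cauchySeq_iff_tendsto, uniformity_eq_comap_nhds_zero G, tendsto_comap_iff,
    ← prod_atTop_atTop_eq, tendsto_iff_seq_tendsto]
  intro x hx
  have hfst : Tendsto (fun j => (x j).1) atTop atTop := tendsto_fst.comp hx
  have hsnd : Tendsto (fun j => (x j).2) atTop atTop := tendsto_snd.comp hx
  set r : ℕ → ℕ := fun j => min (x j).1 (x j).2
  have hr : Tendsto r atTop atTop := tendsto_atTop.2 fun b => by
    filter_upwards [hfst.eventually_ge_atTop b, hsnd.eventually_ge_atTop b] with j h1 h2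
    exact le_min h1 h2
  -- both coordinates are compared with their minimum, so that only ordered pairs occur
  have key := (h r _ hr fun j => min_le_right _ _).sub (h r _ hr fun j => min_le_left _ _)
  simpa only [Function.comp_def, Prod.map, sub_sub_sub_cancel_right, sub_zero] using key

theorem cauchySeq_of_monotone_of_monotone_sub {G : Type*} [AddCommGroup G] [PartialOrder G]
    [IsOrderedAddMonoid G] [UniformSpace G] [IsUniformAddGroup G]
    (hsqueeze : ∀ v w : ℕ → G, 0 ≤ v → v ≤ w → Tendsto w atTop (𝓝 0) →
      Tendsto v atTop (𝓝 0))
    {p q : ℕ → G} {s : G} (hp : Monotone p) (hqp : Monotone (q - p))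
    (hq : Tendsto q atTop (𝓝 s)) :
    CauchySeq p := by
  refine cauchySeq_of_tendsto_sub_of_le fun a b ha hab => ?_
  have hb : Tendsto b atTop atTop := tendsto_atTop_mono hab ha
  refine hsqueeze _ (fun j => q (b j) - q (a j)) (fun j => sub_nonneg.2 (hp (hab j)))
    (fun j => ?_) (by simpa using (hq.comp hb).sub (hq.comp ha))
  have h := hqp (hab j)
  simp only [Pi.sub_apply, sub_le_sub_iff] at h ⊢
  rwa [add_comm]

theorem partialSups_nat_add_one {α : Type*} [SemilatticeSup α] (f : ℕ → α) (n : ℕ) :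
    partialSups f (n + 1) = partialSups f n ⊔ f (n + 1) :=
  partialSups_succ f n

theorem SeriesConvTo.tail {G : Type*} [AddCommGroup G] [TopologicalSpace G]
    [IsTopologicalAddGroup G] {x : ℕ → G} {s : G} (h : SeriesConvTo x s) (m : ℕ) :
    SeriesConvTo (fun i => x (m + 1 + i)) (s - ∑ i ∈ Finset.range (m + 1), x i) := by
  have hsum : ∀ N, ∑ i ∈ Finset.range (N + 1), x (m + 1 + i) =
      ∑ i ∈ Finset.range (m + 1 + N + 1), x i - ∑ i ∈ Finset.range (m + 1), x i := fun N => by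
    rw [show m + 1 + N + 1 = m + 1 + (N + 1) by omega, Finset.sum_range_add_sub_sum_range]
  unfold SeriesConvTo
  simp only [hsum]
  exact (h.comp (tendsto_atTop_mono (Nat.le_add_left · (m + 1)) tendsto_id)).sub_const _

theorem symmDiff_iUnion_partialSups_subset {X : Type*} (A : ℕ → Set X) (m : ℕ) :
    symmDiff (⋃ i, A i) (partialSups A m) ⊆ ⋃ i, A (m + 1 + i) := by
  rw [Set.symmDiff_def, Set.sdiff_eq_empty.2 (partialSups_le A m _ fun i _ => Set.subset_iUnion A i),
    Set.union_empty]
  rintro x ⟨hx, hxm⟩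
  obtain ⟨i, hi⟩ := Set.mem_iUnion.1 hx
  have hmi : m < i := lt_of_not_ge fun him => hxm (le_partialSups_of_le A him hi)
  exact Set.mem_iUnion.2 ⟨i - (m + 1), by rwa [Nat.add_sub_cancel' hmi]⟩

section StableSets

variable {X G : Type*} [AddCommGroup G] {S : Set (Set X)} {μ : Set X → G}

theorem measure_union_eq_add_sdiff (hdiff : ∀ A B : Set X, A ∈ S → B ∈ S → A \ B ∈ S)
    (hμadd : ∀ A B : Set X, A ∈ S → B ∈ S → Disjoint A B → μ (A ∪ B) = μ A + μ B)
    {A B : Set X} (hA : A ∈ S) (hB : B ∈ S) :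
    μ (A ∪ B) = μ A + μ (B \ A) := by
  rw [← Set.union_sdiff_self]
  exact hμadd _ _ hA (hdiff _ _ hB hA) Set.disjoint_sdiff_right

theorem measure_mono_of_mem [PartialOrder G] [IsOrderedAddMonoid G]
    (hdiff : ∀ A B : Set X, A ∈ S → B ∈ S → A \ B ∈ S)
    (hμadd : ∀ A B : Set X, A ∈ S → B ∈ S → Disjoint A B → μ (A ∪ B) = μ A + μ B)
    (hμpos : ∀ A : Set X, A ∈ S → 0 ≤ μ A)
    {A B : Set X} (hA : A ∈ S) (hB : B ∈ S) (hAB : A ⊆ B) :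
    μ A ≤ μ B :=
  calc μ A ≤ μ A + μ (B \ A) := le_add_of_nonneg_right (hμpos _ (hdiff _ _ hB hA))
    _ = μ B := by rw [← measure_union_eq_add_sdiff hdiff hμadd hA hB, Set.union_eq_right.2 hAB]

theorem partialSups_mem (hunion : ∀ A B : Set X, A ∈ S → B ∈ S → A ∪ B ∈ S)
    {A : ℕ → Set X} (hA : ∀ i, A i ∈ S) (n : ℕ) :
    partialSups A n ∈ S := by
  induction n with
  | zero => simpa using hA 0
  | succ n ih => rw [partialSups_nat_add_one]; exact hunion _ _ ih (hA _)

theorem monotone_measure_partialSups [PartialOrder G] [IsOrderedAddMonoid G]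
    (hunion : ∀ A B : Set X, A ∈ S → B ∈ S → A ∪ B ∈ S)
    (hdiff : ∀ A B : Set X, A ∈ S → B ∈ S → A \ B ∈ S)
    (hμadd : ∀ A B : Set X, A ∈ S → B ∈ S → Disjoint A B → μ (A ∪ B) = μ A + μ B)
    (hμpos : ∀ A : Set X, A ∈ S → 0 ≤ μ A)
    {A : ℕ → Set X} (hA : ∀ i, A i ∈ S) :
    Monotone fun n => μ (partialSups A n) := by
  have hB := partialSups_mem hunion hA
  refine monotone_nat_of_le_succ fun n => ?_
  rw [partialSups_nat_add_one]
  exact measure_mono_of_mem hdiff hμadd hμpos (hB n) (hunion _ _ (hB n) (hA _)) le_sup_left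

theorem monotone_sum_sub_measure_partialSups [PartialOrder G] [IsOrderedAddMonoid G]
    (hunion : ∀ A B : Set X, A ∈ S → B ∈ S → A ∪ B ∈ S)
    (hdiff : ∀ A B : Set X, A ∈ S → B ∈ S → A \ B ∈ S)
    (hμadd : ∀ A B : Set X, A ∈ S → B ∈ S → Disjoint A B → μ (A ∪ B) = μ A + μ B)
    (hμpos : ∀ A : Set X, A ∈ S → 0 ≤ μ A)
    {A : ℕ → Set X} (hA : ∀ i, A i ∈ S) :
    Monotone ((fun n => ∑ i ∈ Finset.range (n + 1), μ (A i)) - fun n => μ (partialSups A n)) := by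
  have hB := partialSups_mem hunion hA
  refine monotone_nat_of_le_succ fun n => ?_
  have hnew : μ (A (n + 1) \ partialSups A n) ≤ μ (A (n + 1)) :=
    measure_mono_of_mem hdiff hμadd hμpos (hdiff _ _ (hA _) (hB n)) (hA _) Set.sdiff_subset
  simp only [Pi.sub_apply, Finset.sum_range_succ _ (n + 1), partialSups_nat_add_one,
    Set.sup_eq_union, measure_union_eq_add_sdiff hdiff hμadd (hB n) (hA _)]
  calc _ ≤ ∑ i ∈ Finset.range (n + 1), μ (A i) - μ (partialSups A n) +
        (μ (A (n + 1)) - μ (A (n + 1) \ partialSups A n)) :=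
      le_add_of_nonneg_right (sub_nonneg.2 hnew)
    _ = _ := by abel

theorem measure_partialSups_of_pairwise_disjoint
    (hunion : ∀ A B : Set X, A ∈ S → B ∈ S → A ∪ B ∈ S)
    (hμadd : ∀ A B : Set X, A ∈ S → B ∈ S → Disjoint A B → μ (A ∪ B) = μ A + μ B)
    {A : ℕ → Set X} (hA : ∀ i, A i ∈ S) (hdisj : Pairwise (Function.onFun Disjoint A)) (n : ℕ) :
    μ (partialSups A n) = ∑ i ∈ Finset.range (n + 1), μ (A i) := by
  induction n with
  | zero => simp
  | succ n ih =>
    rw [partialSups_nat_add_one, Finset.sum_range_succ, ← ih]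
    exact hμadd _ _ (partialSups_mem hunion hA n) (hA _)
      (partialSups_disjoint_of_disjoint A hdisj n.lt_succ_self)

theorem rMeasureVal_iUnion [TopologicalSpace G] [IsTopologicalAddGroup G]
    (hunion : ∀ A B : Set X, A ∈ S → B ∈ S → A ∪ B ∈ S)
    {A : ℕ → Set X} (hA : ∀ i, A i ∈ S) {s L : G} (hs : SeriesConvTo (fun i => μ (A i)) s)
    (hL : Tendsto (fun n => μ (partialSups A n)) atTop (𝓝 L)) :
    RMeasureVal S μ (⋃ i, A i) L := by
  refine ⟨partialSups A, fun m i => A (m + 1 + i),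
    fun m => s - ∑ i ∈ Finset.range (m + 1), μ (A i), partialSups_mem hunion hA,
    fun _ _ => hA _, hs.tail, symmDiff_iUnion_partialSups_subset A, ?_, hL⟩
  simpa using (tendsto_const_nhds (x := s)).sub hs

end StableSets

theorem countable_union_of_stable_measurable_general {G : Type*} [AddCommGroup G]
    [UniformSpace G] [IsUniformAddGroup G] [CompleteSpace G] [T2Space G]
    [PartialOrder G] {X : Type*}
    (hadd : ∀ a b c : G, a ≤ b → a + c ≤ b + c)
    (hsqueeze : ∀ (u v w : ℕ → G), (∀ n, u n ≤ v n) → (∀ n, v n ≤ w n) →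
      Tendsto u atTop (𝓝 (0 : G)) → Tendsto w atTop (𝓝 (0 : G)) →
      Tendsto v atTop (𝓝 (0 : G)))
    (S : Set (Set X)) (μ : Set X → G)
    (hunion : ∀ A B : Set X, A ∈ S → B ∈ S → A ∪ B ∈ S)
    (hdiff : ∀ A B : Set X, A ∈ S → B ∈ S → A \ B ∈ S)
    (hμadd : ∀ A B : Set X, A ∈ S → B ∈ S → Disjoint A B → μ (A ∪ B) = μ A + μ B)
    (hμpos : ∀ A : Set X, A ∈ S → 0 ≤ μ A)
    (A : ℕ → Set X) (hA : ∀ i, A i ∈ S)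
    (s : G) (hs : SeriesConvTo (fun i => μ (A i)) s) :
    ∃ L : G, Tendsto (fun n => μ (⋃ i ∈ Finset.range (n + 1), A i)) atTop (𝓝 L) ∧
      RMeasureVal S μ (⋃ i, A i) L ∧
      (Pairwise (Function.onFun Disjoint A) → L = s) := by
  have : IsOrderedAddMonoid G := { add_le_add_left := fun a b h c => hadd a b c h }
  simp_rw [← partialSups_eq_biUnion_range]
  have hcauchy : CauchySeq fun n => μ (partialSups A n) :=
    cauchySeq_of_monotone_of_monotone_sub
      (fun v w h0 hvw hw => hsqueeze 0 v w h0 hvw tendsto_const_nhds hw)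
      (monotone_measure_partialSups hunion hdiff hμadd hμpos hA)
      (monotone_sum_sub_measure_partialSups hunion hdiff hμadd hμpos hA) hs
  obtain ⟨L, hL⟩ := cauchySeq_tendsto_of_complete hcauchy
  refine ⟨L, hL, rMeasureVal_iUnion hunion hA hs hL, fun hdisj => tendsto_nhds_unique ?_ hs⟩
  simpa only [measure_partialSups_of_pairwise_disjoint hunion hμadd hA hdisj] using hL

/-- Countable unions of stable sets are measurable: if each `A i` is stable and
`Σ_i μ (A i)` converges to `s`, then `A = ⋃ i, A i` is measurable with measure
`L = lim_n μ (⋃_{i≤n} A i)`; if moreover the `A i` are pairwise disjoint, then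
the measure of `A` equals `s = Σ_i μ (A i)`. -/
theorem countable_union_of_stable_measurable {G : Type*} [AddCommGroup G]
    [UniformSpace G] [IsUniformAddGroup G] [CompleteSpace G] [T2Space G]
    [PartialOrder G] {X : Type*}
    (hadd : ∀ a b c : G, a ≤ b → a + c ≤ b + c)
    (hclosed : ∀ (u v : ℕ → G) (lu lv : G), (∀ n, u n ≤ v n) →
      Tendsto u atTop (𝓝 lu) → Tendsto v atTop (𝓝 lv) → lu ≤ lv)
    (hsqueeze : ∀ (u v w : ℕ → G), (∀ n, u n ≤ v n) → (∀ n, v n ≤ w n) →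
      Tendsto u atTop (𝓝 (0 : G)) → Tendsto w atTop (𝓝 (0 : G)) →
      Tendsto v atTop (𝓝 (0 : G)))
    (S : Set (Set X)) (μ : Set X → G)
    (hempty : ∅ ∈ S)
    (hunion : ∀ A B : Set X, A ∈ S → B ∈ S → A ∪ B ∈ S)
    (hinter : ∀ A B : Set X, A ∈ S → B ∈ S → A ∩ B ∈ S)
    (hdiff : ∀ A B : Set X, A ∈ S → B ∈ S → A \ B ∈ S)
    (hsubcover : ∀ A : Set X, A ∈ S → ∀ C : ℕ → Set X, (∀ i, C i ∈ S) →
      A ⊆ ⋃ i, C i → ∃ F : Finset ℕ, A ⊆ ⋃ i ∈ F, C i)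
    (hμadd : ∀ A B : Set X, A ∈ S → B ∈ S → Disjoint A B → μ (A ∪ B) = μ A + μ B)
    (hμpos : ∀ A : Set X, A ∈ S → 0 ≤ μ A)
    (A : ℕ → Set X) (hA : ∀ i, A i ∈ S)
    (s : G) (hs : SeriesConvTo (fun i => μ (A i)) s) :
    ∃ L : G, Tendsto (fun n => μ (⋃ i ∈ Finset.range (n + 1), A i)) atTop (𝓝 L) ∧
      RMeasureVal S μ (⋃ i, A i) L ∧
      (Pairwise (Function.onFun Disjoint A) → L = s) :=
  countable_union_of_stable_measurable_general hadd hsqueeze S μ hunion hdiff hμadd hμpos A hA s hs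
end

section
/- Domination lemma for measures of nested stable sets (Lemma 29 of the paper): Let (A_i)_{i∈ℕ} and (B_i)_{i∈ℕ} be sequences of members of 𝒮 with A_i ⊆ B_i for every i. If the series Σ_{i∈ℕ} μ(B_i) is convergent, then the series Σ_{i∈ℕ} μ(A_i) is convergent. -/
/-!
Finite additivity and positivity make `μ` monotone on `𝒮`, so `0 ≤ μ (A i) ≤ μ (B i)`, and every
block `∑_{N < i ≤ N + k} μ (A i)` of the `A`-series lies between `0` and the corresponding block of
the `B`-series. Since the `B`-series converges, its blocks tend to `0` as `N → ∞`, uniformly in `k`.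
The squeeze property, applied along sequences, transfers this to the `A`-blocks, so the partial
sums of the `A`-series are Cauchy and converge by completeness.
-/

open Filter Topology

theorem cauchySeq_iff_tendsto_add_sub {G : Type*} [AddCommGroup G] [UniformSpace G]
    [IsUniformAddGroup G] {u : ℕ → G} :
    CauchySeq u ↔ Tendsto (fun p : ℕ × ℕ => u (p.1 + p.2) - u p.1) (atTop ×ˢ ⊤) (𝓝 0) := by
  constructor
  · intro hu
    have hpairs : Tendsto (fun p : ℕ × ℕ => (p.1, p.1 + p.2)) (atTop ×ˢ ⊤) atTop := by
      rw [← prod_atTop_atTop_eq]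
      exact tendsto_fst.prodMk (tendsto_atTop_mono (fun p => Nat.le_add_right _ _) tendsto_fst)
    have := (cauchySeq_iff_tendsto.1 hu).comp hpairs
    rwa [uniformity_eq_comap_nhds_zero, tendsto_comap_iff] at this
  · intro h
    rw [(𝓝 (0 : G)).basis_sets.uniformity_of_nhds_zero_swapped.cauchySeq_iff']
    intro V hV
    obtain ⟨N, hN⟩ := eventually_atTop.1 (mem_prod_top.1 (h hV))
    exact ⟨N, fun n hn => by simpa [Nat.add_sub_cancel' hn] using hN N le_rfl (n - N)⟩

theorem squeeze_zero_of_isCountablyGenerated {G : Type*} [Zero G] [TopologicalSpace G] [LE G]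
    (hsqueeze : ∀ (u v w : ℕ → G), (∀ n, u n ≤ v n) → (∀ n, v n ≤ w n) →
      Tendsto u atTop (𝓝 (0 : G)) → Tendsto w atTop (𝓝 (0 : G)) →
      Tendsto v atTop (𝓝 (0 : G)))
    {ι : Type*} {l : Filter ι} [l.IsCountablyGenerated] {f g h : ι → G}
    (hfg : ∀ i, f i ≤ g i) (hgh : ∀ i, g i ≤ h i)
    (hf : Tendsto f l (𝓝 0)) (hh : Tendsto h l (𝓝 0)) : Tendsto g l (𝓝 0) :=
  tendsto_iff_seq_tendsto.2 fun x hx =>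
    hsqueeze _ _ _ (fun n => hfg (x n)) (fun n => hgh (x n)) (hf.comp hx) (hh.comp hx)

theorem cauchySeq_partialSums_of_nonneg_of_le {G : Type*} [AddCommGroup G] [UniformSpace G]
    [IsUniformAddGroup G] [PartialOrder G] [IsOrderedAddMonoid G]
    (hsqueeze : ∀ (u v w : ℕ → G), (∀ n, u n ≤ v n) → (∀ n, v n ≤ w n) →
      Tendsto u atTop (𝓝 (0 : G)) → Tendsto w atTop (𝓝 (0 : G)) →
      Tendsto v atTop (𝓝 (0 : G)))
    {f g : ℕ → G} (hf : ∀ i, 0 ≤ f i) (hfg : ∀ i, f i ≤ g i)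
    (hg : CauchySeq fun N => ∑ i ∈ Finset.range (N + 1), g i) :
    CauchySeq fun N => ∑ i ∈ Finset.range (N + 1), f i := by
  have tail_eq (x : ℕ → G) (p : ℕ × ℕ) :
      ∑ i ∈ Finset.range (p.1 + p.2 + 1), x i - ∑ i ∈ Finset.range (p.1 + 1), x i =
        ∑ i ∈ Finset.Ico (p.1 + 1) (p.1 + p.2 + 1), x i :=
    (Finset.sum_Ico_eq_sub _ (by omega)).symm
  rw [cauchySeq_iff_tendsto_add_sub] at hg ⊢
  simp only [tail_eq] at hg ⊢
  exact squeeze_zero_of_isCountablyGenerated hsqueeze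
    (fun _ => Finset.sum_nonneg fun i _ => hf i) (fun _ => Finset.sum_le_sum fun i _ => hfg i)
    tendsto_const_nhds hg

theorem mono_of_additive_of_nonneg {X G : Type*} [AddCommMonoid G] [PartialOrder G]
    [IsOrderedAddMonoid G] {S : Set (Set X)} {μ : Set X → G}
    (hdiff : ∀ A B : Set X, A ∈ S → B ∈ S → A \ B ∈ S)
    (hμadd : ∀ A B : Set X, A ∈ S → B ∈ S → Disjoint A B → μ (A ∪ B) = μ A + μ B)
    (hμpos : ∀ A : Set X, A ∈ S → 0 ≤ μ A)
    {A B : Set X} (hA : A ∈ S) (hB : B ∈ S) (hAB : A ⊆ B) : μ A ≤ μ B := by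
  have hBA := hdiff B A hB hA
  calc μ A ≤ μ A + μ (B \ A) := le_add_of_nonneg_right (hμpos _ hBA)
    _ = μ B := by rw [← hμadd A _ hA hBA Set.disjoint_sdiff_right, Set.union_sdiff_cancel hAB]

theorem series_of_measures_of_nested_stable_sets_general {G : Type*} [AddCommGroup G]
    [UniformSpace G] [IsUniformAddGroup G] [CompleteSpace G]
    [PartialOrder G] {X : Type*}
    (hadd : ∀ a b c : G, a ≤ b → a + c ≤ b + c)
    (hsqueeze : ∀ (u v w : ℕ → G), (∀ n, u n ≤ v n) → (∀ n, v n ≤ w n) →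
      Tendsto u atTop (𝓝 (0 : G)) → Tendsto w atTop (𝓝 (0 : G)) →
      Tendsto v atTop (𝓝 (0 : G)))
    (S : Set (Set X)) (μ : Set X → G)
    (hdiff : ∀ A B : Set X, A ∈ S → B ∈ S → A \ B ∈ S)
    (hμadd : ∀ A B : Set X, A ∈ S → B ∈ S → Disjoint A B → μ (A ∪ B) = μ A + μ B)
    (hμpos : ∀ A : Set X, A ∈ S → 0 ≤ μ A)
    (A B : ℕ → Set X) (hA : ∀ i, A i ∈ S) (hB : ∀ i, B i ∈ S)
    (hAB : ∀ i, A i ⊆ B i)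
    (sB : G) (hsB : SeriesConvTo (fun i => μ (B i)) sB) :
    ∃ sA : G, SeriesConvTo (fun i => μ (A i)) sA := by
  have : IsOrderedAddMonoid G := { add_le_add_left := fun a b h c => hadd a b c h }
  have hle (i : ℕ) : μ (A i) ≤ μ (B i) :=
    mono_of_additive_of_nonneg hdiff hμadd hμpos (hA i) (hB i) (hAB i)
  exact cauchySeq_tendsto_of_complete <| cauchySeq_partialSums_of_nonneg_of_le hsqueeze
    (fun i => hμpos _ (hA i)) hle hsB.cauchySeq

/-- Domination lemma: if `A i ⊆ B i` are stable sets for every `i` and the series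
`Σ_i μ (B i)` converges, then the series `Σ_i μ (A i)` converges. -/
theorem series_of_measures_of_nested_stable_sets {G : Type*} [AddCommGroup G]
    [UniformSpace G] [IsUniformAddGroup G] [CompleteSpace G] [T2Space G]
    [PartialOrder G] {X : Type*}
    (hadd : ∀ a b c : G, a ≤ b → a + c ≤ b + c)
    (hclosed : ∀ (u v : ℕ → G) (lu lv : G), (∀ n, u n ≤ v n) →
      Tendsto u atTop (𝓝 lu) → Tendsto v atTop (𝓝 lv) → lu ≤ lv)
    (hsqueeze : ∀ (u v w : ℕ → G), (∀ n, u n ≤ v n) → (∀ n, v n ≤ w n) →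
      Tendsto u atTop (𝓝 (0 : G)) → Tendsto w atTop (𝓝 (0 : G)) →
      Tendsto v atTop (𝓝 (0 : G)))
    (S : Set (Set X)) (μ : Set X → G)
    (hempty : ∅ ∈ S)
    (hunion : ∀ A B : Set X, A ∈ S → B ∈ S → A ∪ B ∈ S)
    (hinter : ∀ A B : Set X, A ∈ S → B ∈ S → A ∩ B ∈ S)
    (hdiff : ∀ A B : Set X, A ∈ S → B ∈ S → A \ B ∈ S)
    (hsubcover : ∀ A : Set X, A ∈ S → ∀ C : ℕ → Set X, (∀ i, C i ∈ S) →
      A ⊆ ⋃ i, C i → ∃ F : Finset ℕ, A ⊆ ⋃ i ∈ F, C i)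
    (hμadd : ∀ A B : Set X, A ∈ S → B ∈ S → Disjoint A B → μ (A ∪ B) = μ A + μ B)
    (hμpos : ∀ A : Set X, A ∈ S → 0 ≤ μ A)
    (A B : ℕ → Set X) (hA : ∀ i, A i ∈ S) (hB : ∀ i, B i ∈ S)
    (hAB : ∀ i, A i ⊆ B i)
    (sB : G) (hsB : SeriesConvTo (fun i => μ (B i)) sB) :
    ∃ sA : G, SeriesConvTo (fun i => μ (A i)) sA :=
  series_of_measures_of_nested_stable_sets_general hadd hsqueeze S μ hdiff hμadd hμpos A B hA hB hAB
    sB hsB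
end

section
/- Specialization of the extended measure along a continuous order-preserving additive map (abstract form of the paper's proposition that the motivic measure specializes to the Haar measure): Let Y ⊆ X and let ν be a countably additive measure on a σ-algebra Σ of subsets of Y such that C ∩ Y ∈ Σ for every C ∈ 𝒮. Let φ : G → ℝ be a continuous additive group homomorphism that is order-preserving (a ≤ b implies φ(a) ≤ φ(b)), and suppose ν(C ∩ Y) = φ(μ(C)) for every C ∈ 𝒮. Then for every measurable A ⊆ X (in the sense of the definition below), the set A ∩ Y is measurable with respect to the completion ν̄ of ν, and ν̄(A ∩ Y) = φ(μ(A)). -/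
open Filter Topology MeasureTheory

/-! The trace `A ∩ Y` differs from the measurable traces `Aₘ ∩ Y` by a set covered by the traces
of the `Cₘᵢ`, whose `ν`-measure is at most `φ (Σᵢ μ Cₘᵢ) → 0` by countable subadditivity of `ν`
and compatibility. A set approximable in this sense by measurable sets is null measurable, and
`ν` is continuous for the pseudometric `ν (s ∆ t)`, so `ν (A ∩ Y) = lim ν (Aₘ ∩ Y) = lim φ (μ Aₘ)
= φ L`. -/

open scoped symmDiff

section SymmDiffApproximation

variable {α : Type*} [MeasurableSpace α] {μ : Measure α}

theorem nullMeasurableSet_of_tendsto_measure_symmDiff {s : Set α} {t : ℕ → Set α}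
    (ht : ∀ n, MeasurableSet (t n)) (h : Tendsto (fun n => μ (s ∆ t n)) atTop (𝓝 0)) :
    NullMeasurableSet s μ := by
  set d : ℕ → Set α := fun n => toMeasurable μ (s ∆ t n)
  set inner : Set α := ⋃ n, t n \ d n
  have h_inner_subset : inner ⊆ s := by
    simp only [inner, Set.iUnion_subset_iff]
    intro n x ⟨hxt, hxd⟩
    by_contra hxs
    exact hxd (subset_toMeasurable μ _ (Or.inr ⟨hxt, hxs⟩))
  have h_rest_null : μ (s \ inner) = 0 := by
    refine le_antisymm (ge_of_tendsto' h fun n => ?_) zero_le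
    calc μ (s \ inner) ≤ μ (d n) := measure_mono fun x ⟨hxs, hx⟩ => by
          by_cases hxt : x ∈ t n
          · by_contra hxd
            exact hx (Set.mem_iUnion.2 ⟨n, hxt, hxd⟩)
          · exact subset_toMeasurable μ _ (Or.inl ⟨hxs, hxt⟩)
      _ = μ (s ∆ t n) := measure_toMeasurable _
  have h_ae : inner =ᵐ[μ] s :=
    ae_eq_set.2 ⟨by rw [Set.sdiff_eq_empty.2 h_inner_subset, measure_empty], h_rest_null⟩
  exact (MeasurableSet.iUnion fun n =>
    (ht n).diff (measurableSet_toMeasurable _ _)).nullMeasurableSet.congr h_ae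

theorem tendsto_measure_of_tendsto_measure_symmDiff {ι : Type*} {l : Filter ι} {s : Set α}
    {t : ι → Set α} (h : Tendsto (fun i => μ (s ∆ t i)) l (𝓝 0)) :
    Tendsto (fun i => μ (t i)) l (𝓝 (μ s)) :=
  ENNReal.tendsto_nhds_of_Icc fun ε hε => by
    filter_upwards [ENNReal.tendsto_nhds_zero.1 h ε hε] with i hi
    refine ⟨tsub_le_iff_right.2 (tsub_le_iff_left.1 (le_measure_symmDiff.trans hi)), ?_⟩
    rw [symmDiff_comm] at hi
    exact tsub_le_iff_left.1 (le_measure_symmDiff.trans hi)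

theorem measure_iUnion_le_ofReal_of_hasSum {ι : Type*} [Countable ι] {t : ι → Set α}
    {f : ι → ℝ} {a : ℝ} (hf : HasSum f a) (hf_nonneg : ∀ i, 0 ≤ f i)
    (h : ∀ i, μ (t i) ≤ ENNReal.ofReal (f i)) : μ (⋃ i, t i) ≤ ENNReal.ofReal a :=
  calc μ (⋃ i, t i) ≤ ∑' i, μ (t i) := measure_iUnion_le _
    _ ≤ ∑' i, ENNReal.ofReal (f i) := ENNReal.tsum_le_tsum h
    _ = ENNReal.ofReal a := by
      rw [← ENNReal.ofReal_tsum_of_nonneg hf_nonneg hf.summable, hf.tsum_eq]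

end SymmDiffApproximation

theorem SeriesConvTo.hasSum_map {G : Type*} [AddCommMonoid G] [TopologicalSpace G]
    {x : ℕ → G} {s : G} (hx : SeriesConvTo x s) (φ : G →+ ℝ) (hφ : Continuous φ)
    (h_nonneg : ∀ i, 0 ≤ φ (x i)) : HasSum (fun i => φ (x i)) (φ s) := by
  rw [hasSum_iff_tendsto_nat_of_nonneg h_nonneg]
  have h_image := (hφ.tendsto s).comp hx
  simp only [Function.comp_def, map_sum] at h_image
  exact (tendsto_add_atTop_iff_nat 1).1 h_image

theorem extended_measure_specializes_general {G : Type*} [AddCommGroup G] [UniformSpace G]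
    [PartialOrder G]
    {X : Type*}
    (S : Set (Set X)) (μ : Set X → G)
    (hμpos : ∀ A : Set X, A ∈ S → 0 ≤ μ A)
    (Y : Set X) [MeasurableSpace Y] (ν : Measure Y)
    (hSmeas : ∀ C ∈ S, MeasurableSet ((Subtype.val ⁻¹' C : Set Y)))
    (φ : G → ℝ)
    (hφadd : ∀ a b : G, φ (a + b) = φ a + φ b)
    (hφcont : Continuous φ)
    (hφmono : ∀ a b : G, a ≤ b → φ a ≤ φ b)
    (hcompat : ∀ C ∈ S, ν (Subtype.val ⁻¹' C : Set Y) = ENNReal.ofReal (φ (μ C)))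
    (A : Set X) (L : G) (hA : RMeasureVal S μ A L) :
    NullMeasurableSet (Subtype.val ⁻¹' A : Set Y) ν ∧
      ν (Subtype.val ⁻¹' A : Set Y) = ENNReal.ofReal (φ L) := by
  obtain ⟨Am, C, s, hAmS, hCS, hconv, hcover, hs0, hμAm⟩ := hA
  let φ' : G →+ ℝ := AddMonoidHom.mk' φ hφadd
  have hφ0 : φ 0 = 0 := map_zero φ'
  have hφμ_nonneg : ∀ D ∈ S, 0 ≤ φ (μ D) := fun D hD => hφ0 ▸ hφmono 0 _ (hμpos D hD)
  have h_symmDiff_le : ∀ m, ν ((Subtype.val ⁻¹' A) ∆ (Subtype.val ⁻¹' Am m)) ≤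
      ENNReal.ofReal (φ (s m)) := fun m => by
    have h_cover : (Subtype.val ⁻¹' A : Set Y) ∆ (Subtype.val ⁻¹' Am m) ⊆
        ⋃ i, Subtype.val ⁻¹' C m i := by
      rw [← Set.preimage_symmDiff, ← Set.preimage_iUnion]
      exact Set.preimage_mono (hcover m)
    exact (measure_mono h_cover).trans (measure_iUnion_le_ofReal_of_hasSum
      ((hconv m).hasSum_map φ' hφcont fun i => hφμ_nonneg _ (hCS m i))
      (fun i => hφμ_nonneg _ (hCS m i)) fun i => (hcompat _ (hCS m i)).le)
  have h_bound : Tendsto (fun m => ENNReal.ofReal (φ (s m))) atTop (𝓝 0) := by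
    simpa [hφ0, Function.comp_def] using
      (ENNReal.continuous_ofReal.comp hφcont).tendsto 0 |>.comp hs0
  have h_symmDiff_tendsto :
      Tendsto (fun m => ν ((Subtype.val ⁻¹' A) ∆ (Subtype.val ⁻¹' Am m))) atTop (𝓝 0) :=
    tendsto_of_tendsto_of_tendsto_of_le_of_le tendsto_const_nhds h_bound
      (fun _ => zero_le) h_symmDiff_le
  refine ⟨nullMeasurableSet_of_tendsto_measure_symmDiff (fun m => hSmeas _ (hAmS m))
    h_symmDiff_tendsto, tendsto_nhds_unique
      (tendsto_measure_of_tendsto_measure_symmDiff h_symmDiff_tendsto) ?_⟩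
  simp only [hcompat _ (hAmS _)]
  exact (ENNReal.continuous_ofReal.comp hφcont).tendsto L |>.comp hμAm

/-- Specialization of the extended measure along a continuous order-preserving
additive map: if `ν` is a countably additive measure on a σ-algebra of subsets of
`Y ⊆ X` containing all traces `C ∩ Y` of stable sets, `φ : G → ℝ` is a continuous
order-preserving additive homomorphism with `ν (C ∩ Y) = φ (μ C)` for all stable
`C`, then for every measurable `A ⊆ X` with measure value `L`, the trace `A ∩ Y`
is measurable for the completion of `ν` and its measure is `φ L`. -/
theorem extended_measure_specializes {G : Type*} [AddCommGroup G] [UniformSpace G]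
    [IsUniformAddGroup G] [CompleteSpace G] [T2Space G] [PartialOrder G]
    {X : Type*}
    (hadd : ∀ a b c : G, a ≤ b → a + c ≤ b + c)
    (hclosed : ∀ (u v : ℕ → G) (lu lv : G), (∀ n, u n ≤ v n) →
      Tendsto u atTop (𝓝 lu) → Tendsto v atTop (𝓝 lv) → lu ≤ lv)
    (hsqueeze : ∀ (u v w : ℕ → G), (∀ n, u n ≤ v n) → (∀ n, v n ≤ w n) →
      Tendsto u atTop (𝓝 (0 : G)) → Tendsto w atTop (𝓝 (0 : G)) →
      Tendsto v atTop (𝓝 (0 : G)))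
    (S : Set (Set X)) (μ : Set X → G)
    (hempty : ∅ ∈ S)
    (hunion : ∀ A B : Set X, A ∈ S → B ∈ S → A ∪ B ∈ S)
    (hinter : ∀ A B : Set X, A ∈ S → B ∈ S → A ∩ B ∈ S)
    (hdiff : ∀ A B : Set X, A ∈ S → B ∈ S → A \ B ∈ S)
    (hsubcover : ∀ A : Set X, A ∈ S → ∀ C : ℕ → Set X, (∀ i, C i ∈ S) →
      A ⊆ ⋃ i, C i → ∃ F : Finset ℕ, A ⊆ ⋃ i ∈ F, C i)
    (hμadd : ∀ A B : Set X, A ∈ S → B ∈ S → Disjoint A B → μ (A ∪ B) = μ A + μ B)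
    (hμpos : ∀ A : Set X, A ∈ S → 0 ≤ μ A)
    (Y : Set X) [MeasurableSpace Y] (ν : Measure Y)
    (hSmeas : ∀ C ∈ S, MeasurableSet ((Subtype.val ⁻¹' C : Set Y)))
    (φ : G → ℝ)
    (hφadd : ∀ a b : G, φ (a + b) = φ a + φ b)
    (hφcont : Continuous φ)
    (hφmono : ∀ a b : G, a ≤ b → φ a ≤ φ b)
    (hcompat : ∀ C ∈ S, ν (Subtype.val ⁻¹' C : Set Y) = ENNReal.ofReal (φ (μ C)))
    (A : Set X) (L : G) (hA : RMeasureVal S μ A L) :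
    NullMeasurableSet (Subtype.val ⁻¹' A : Set Y) ν ∧
      ν (Subtype.val ⁻¹' A : Set Y) = ENNReal.ofReal (φ L) :=
  extended_measure_specializes_general S μ hμpos Y ν hSmeas φ hφadd hφcont hφmono hcompat A L hA
end

section
/- p-adic integral of |x²+1| for p ≡ 1 (mod 4) (the q = p case of Example 43 of the paper): If p is a prime with p ≡ 1 (mod 4), then ∫_{ℤ_p} |x² + 1|_p dμ_Haar(x) = (p − 1)/(p + 1). -/
/-!
Since `p ≡ 1 (mod 4)`, `-1` is a square mod `p`, and Hensel's lemma lifts it to `z ∈ ℤ_p` with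
`z² = -1`, so `x² + 1 = (x + z)(x - z)`. The two factors differ by the unit `2z`, hence at most one
of them lies in `pℤ_p`, which gives the pointwise identity `|x² + 1| = |x + z| + |x - z| - 1`.
By translation invariance the integral is therefore `2 ∫ |x| dμ - 1`, and summing over the spheres
`|x| = p⁻ⁿ`, of measure `(1 - p⁻¹) p⁻ⁿ`, gives `∫ |x| dμ = p / (p + 1)`.
-/

open MeasureTheory Metric Polynomial IsLocalRing
open scoped ENNReal

namespace PadicInt

variable {p : ℕ} [Fact p.Prime]

theorem norm_two_eq_one (hp : p ≠ 2) : ‖(2 : ℤ_[p])‖ = 1 := by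
  simpa using (norm_natCast_eq_one_iff (p := p) (n := 2)).2
    ((Nat.coprime_primes Fact.out Nat.prime_two).2 hp)

theorem mem_maximalIdeal_iff_toZMod_eq_zero {x : ℤ_[p]} :
    x ∈ maximalIdeal ℤ_[p] ↔ toZMod x = 0 := by
  rw [← ker_toZMod, RingHom.mem_ker]

theorem exists_sq_eq_neg_one (hp : p % 4 = 1) : ∃ z : ℤ_[p], z ^ 2 = -1 := by
  obtain ⟨y, hy⟩ := ZMod.exists_sq_eq_neg_one_iff.2 (by omega : p % 4 ≠ 3)
  obtain ⟨a, rfl⟩ := ZMod.ringHom_surjective (toZMod : ℤ_[p] →+* ZMod p) y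
  have ha : IsUnit a := by
    rw [← notMem_maximalIdeal, mem_maximalIdeal_iff_toZMod_eq_zero]
    rintro h
    simp [h] at hy
  have h2 : IsUnit (2 : ℤ_[p]) := isUnit_iff.2 (norm_two_eq_one (by omega))
  obtain ⟨z, hz, -⟩ := HenselianRing.is_henselian (I := maximalIdeal ℤ_[p]) (X ^ 2 + 1)
    (monic_X_pow_add_C 1 two_ne_zero) a
    (by rw [mem_maximalIdeal_iff_toZMod_eq_zero]; simp [sq, ← hy])
    (by convert (h2.mul ha).map (Ideal.Quotient.mk (maximalIdeal ℤ_[p])) using 2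
        simp [one_add_one_eq_two])
  exact ⟨z, by simpa [eq_neg_iff_add_eq_zero] using hz⟩

theorem norm_mul_eq_norm_add_norm_sub_one {a b : ℤ_[p]} (h : ‖a - b‖ = 1) :
    ‖a * b‖ = ‖a‖ + ‖b‖ - 1 := by
  have hmax : 1 ≤ max ‖a‖ ‖b‖ := by simpa [← sub_eq_add_neg, h] using nonarchimedean a (-b)
  rcases le_max_iff.1 hmax with ha | hb
  · simp [le_antisymm (norm_le_one a) ha]
  · simp [le_antisymm (norm_le_one b) hb]

theorem closedBall_zero_pow_eq_ker (n : ℕ) :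
    closedBall (0 : ℤ_[p]) (p ^ (-n : ℤ)) =
      (toZModPow n : ℤ_[p] →+* ZMod (p ^ n)).toAddMonoidHom.ker := by
  ext x
  rw [mem_closedBall_zero_iff, norm_le_pow_iff_mem_span_pow, ← ker_toZModPow]
  rfl

theorem index_ker_toZModPow (n : ℕ) :
    (toZModPow n : ℤ_[p] →+* ZMod (p ^ n)).toAddMonoidHom.ker.index = p ^ n := by
  rw [AddSubgroup.index_ker, AddMonoidHom.range_eq_top.2 (ZMod.ringHom_surjective _),
    AddSubgroup.card_top, Nat.card_zmod]

theorem sphere_zero_pow_eq_diff (n : ℕ) :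
    sphere (0 : ℤ_[p]) (p ^ (-n : ℤ)) =
      closedBall 0 (p ^ (-n : ℤ)) \ closedBall 0 (p ^ (-(n + 1 : ℕ) : ℤ)) := by
  ext x
  have h := norm_le_pow_iff_norm_lt_pow_add_one x (-(n + 1 : ℕ) : ℤ)
  rw [show (-(n + 1 : ℕ) : ℤ) + 1 = -n by push_cast; ring] at h
  simp only [mem_sphere_zero_iff_norm, Set.mem_sdiff, mem_closedBall_zero_iff, h, not_lt]
  exact le_antisymm_iff

theorem iUnion_sphere_zero_pow : ⋃ n : ℕ, sphere (0 : ℤ_[p]) (p ^ (-n : ℤ)) = {0}ᶜ := by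
  ext x
  simp only [Set.mem_iUnion, mem_sphere_zero_iff_norm, Set.mem_compl_singleton_iff]
  refine ⟨fun ⟨n, hn⟩ hx => ?_, fun hx => ⟨_, norm_eq_zpow_neg_valuation hx⟩⟩
  rw [hx, norm_zero] at hn
  exact (zpow_pos (by exact_mod_cast (Fact.out : p.Prime).pos) _).ne hn

variable [MeasurableSpace ℤ_[p]] [BorelSpace ℤ_[p]] (μ : Measure ℤ_[p])

theorem integrable_norm [IsFiniteMeasure μ] : Integrable (fun x : ℤ_[p] => ‖x‖) μ :=
  continuous_norm.integrable_of_hasCompactSupport (HasCompactSupport.of_compactSpace _)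

variable [μ.IsAddLeftInvariant]

theorem pow_mul_measure_closedBall_zero (n : ℕ) :
    (p : ℝ≥0∞) ^ n * μ (closedBall 0 (p ^ (-n : ℤ))) = μ Set.univ := by
  have : (toZModPow n : ℤ_[p] →+* ZMod (p ^ n)).toAddMonoidHom.ker.FiniteIndex :=
    ⟨by rw [index_ker_toZModPow]; exact pow_ne_zero _ (Fact.out : p.Prime).ne_zero⟩
  have hmeas := measurableSet_closedBall (x := (0 : ℤ_[p])) (ε := p ^ (-n : ℤ))
  rw [closedBall_zero_pow_eq_ker] at hmeas ⊢
  rw [← AddSubgroup.index_mul_measure _ hmeas, index_ker_toZModPow]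
  push_cast
  rfl

variable [IsProbabilityMeasure μ]

theorem measureReal_closedBall_zero_pow (n : ℕ) :
    μ.real (closedBall 0 (p ^ (-n : ℤ))) = (p : ℝ) ^ (-n : ℤ) := by
  have h := pow_mul_measure_closedBall_zero μ n
  rw [measure_univ, mul_comm] at h
  rw [measureReal_def, ENNReal.eq_inv_of_mul_eq_one_left h]
  simp

theorem measureReal_sphere_zero_pow (n : ℕ) :
    μ.real (sphere 0 (p ^ (-n : ℤ))) = (1 - (p : ℝ)⁻¹) * (p : ℝ) ^ (-n : ℤ) := by
  rw [sphere_zero_pow_eq_diff,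
    measureReal_sdiff (closedBall_subset_closedBall ?_) measurableSet_closedBall,
    measureReal_closedBall_zero_pow, measureReal_closedBall_zero_pow]
  · push_cast
    rw [neg_add, zpow_add₀ (by simp [(Fact.out : p.Prime).ne_zero]), zpow_neg_one]
    ring
  · exact zpow_le_zpow_right₀ (by exact_mod_cast (Fact.out : p.Prime).one_le) (by omega)

theorem integral_norm : ∫ x, ‖x‖ ∂μ = p / (p + 1) := by
  have hp : (1 : ℝ) < p := by exact_mod_cast (Fact.out : p.Prime).one_lt
  have hdisj :
      Pairwise (Function.onFun Disjoint fun n : ℕ => sphere (0 : ℤ_[p]) (p ^ (-n : ℤ))) := by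
    intro m n hmn
    refine Set.disjoint_left.2 fun x hm hn => hmn ?_
    rw [mem_sphere_zero_iff_norm] at hm hn
    have := zpow_right_injective₀ (by positivity) hp.ne' (hm.symm.trans hn)
    omega
  calc ∫ x, ‖x‖ ∂μ = ∫ x in {0}ᶜ, ‖x‖ ∂μ :=
        (setIntegral_eq_integral_of_forall_compl_eq_zero (by simp)).symm
    _ = ∑' n : ℕ, ∫ x in sphere 0 (p ^ (-n : ℤ)), ‖x‖ ∂μ := by
        rw [← iUnion_sphere_zero_pow, integral_iUnion (fun _ => isClosed_sphere.measurableSet)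
          hdisj (integrable_norm μ).integrableOn]
    _ = ∑' n : ℕ, (1 - (p : ℝ)⁻¹) * ((p : ℝ)⁻¹ ^ 2) ^ n := by
        congr 1 with n
        rw [setIntegral_congr_fun isClosed_sphere.measurableSet
            (fun x hx => mem_sphere_zero_iff_norm.1 hx),
          setIntegral_const, measureReal_sphere_zero_pow, smul_eq_mul, zpow_neg, zpow_natCast]
        ring
    _ = p / (p + 1) := by
        rw [tsum_mul_left, tsum_geometric_of_lt_one (by positivity)
          (pow_lt_one₀ (by positivity) (inv_lt_one_of_one_lt₀ hp) two_ne_zero)]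
        have : (p : ℝ) ^ 2 - 1 ≠ 0 := by nlinarith
        field_simp
        ring

end PadicInt

/-- The `p`-adic integral of `|x² + 1|_p` over `ℤ_p`, against the normalized Haar
measure (the translation-invariant Borel probability measure on `ℤ_p`), for a
prime `p ≡ 1 (mod 4)`, equals `(p - 1)/(p + 1)`. -/
theorem padic_integral_abs_sq_add_one_of_one_mod_four (p : ℕ) [Fact p.Prime]
    (hp : p % 4 = 1)
    [MeasurableSpace ℤ_[p]] [BorelSpace ℤ_[p]]
    (μ : Measure ℤ_[p]) [μ.IsAddLeftInvariant] (hμ : μ Set.univ = 1) :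
    ∫ x : ℤ_[p], ‖x ^ 2 + 1‖ ∂μ = ((p : ℝ) - 1) / ((p : ℝ) + 1) := by
  have : IsProbabilityMeasure μ := ⟨hμ⟩
  obtain ⟨z, hz⟩ := PadicInt.exists_sq_eq_neg_one hp
  have hz_norm : ‖z‖ = 1 :=
    PadicInt.isUnit_iff.1 (IsUnit.of_mul_eq_one (-z) (by linear_combination -hz))
  have hnorm (x : ℤ_[p]) : ‖x ^ 2 + 1‖ = ‖x + z‖ + ‖x - z‖ - 1 := by
    rw [← PadicInt.norm_mul_eq_norm_add_norm_sub_one (by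
      rw [add_sub_sub_cancel, ← two_mul, norm_mul, PadicInt.norm_two_eq_one (by omega), hz_norm,
        one_mul])]
    congr 1
    linear_combination hz
  have hplus := (PadicInt.integrable_norm μ).comp_add_right z
  have hminus := (PadicInt.integrable_norm μ).comp_sub_right z
  calc ∫ x, ‖x ^ 2 + 1‖ ∂μ = ∫ x, ‖x + z‖ + ‖x - z‖ - 1 ∂μ := integral_congr_ae (.of_forall hnorm)
    _ = (∫ x, ‖x + z‖ ∂μ) + (∫ x, ‖x - z‖ ∂μ) - 1 := by
      rw [integral_sub (f := fun x => ‖x + z‖ + ‖x - z‖) (hplus.add hminus) (integrable_const 1),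
        integral_add hplus hminus]
      simp
    _ = 2 * (p / (p + 1)) - 1 := by
      rw [integral_add_right_eq_self (‖·‖), integral_sub_right_eq_self (‖·‖),
        PadicInt.integral_norm]
      ring
    _ = ((p : ℝ) - 1) / ((p : ℝ) + 1) := by
      have : (p : ℝ) + 1 ≠ 0 := by positivity
      field_simp
      ring
end

section
/- p-adic integral of |x²+1| for p ≡ 3 (mod 4) (the q = p case of Example 43 of the paper): If p is a prime with p ≡ 3 (mod 4), then ∫_{ℤ_p} |x² + 1|_p dμ_Haar(x) = 1. -/
open Filter Topology MeasureTheory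

/-- The `p`-adic integral of `|x² + 1|_p` over `ℤ_[p]`, against the normalized Haar
measure (the translation-invariant Borel probability measure on `ℤ_p`), for a
prime `p ≡ 3 (mod 4)`, equals `1`. -/
theorem padic_integral_abs_sq_add_one_of_three_mod_four (p : ℕ) [Fact p.Prime]
    (hp : p % 4 = 3)
    [MeasurableSpace ℤ_[p]] [BorelSpace ℤ_[p]]
    (μ : Measure ℤ_[p]) [μ.IsAddLeftInvariant] (hμ : μ Set.univ = 1) :
    ∫ x : ℤ_[p], ‖x ^ 2 + 1‖ ∂μ = 1 := by
  have hnorm : ∀ x : ℤ_[p], ‖x ^ 2 + 1‖ = 1 := by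
    intro x
    rcases lt_or_eq_of_le (PadicInt.norm_le_one (x ^ 2 + 1)) with h | h
    · exfalso
      have hmem : x ^ 2 + 1 ∈ IsLocalRing.maximalIdeal ℤ_[p] := by
        rw [PadicInt.maximalIdeal_eq_span_p, Ideal.mem_span_singleton,
          ← PadicInt.norm_lt_one_iff_dvd]
        exact h
      have hker : PadicInt.toZMod (x ^ 2 + 1) = 0 := by
        have := (PadicInt.ker_toZMod (p := p)).symm ▸ hmem
        exact this
      have : IsSquare (-1 : ZMod p) := by
        refine ⟨PadicInt.toZMod x, ?_⟩
        have : (PadicInt.toZMod x) ^ 2 + 1 = 0 := by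
          simpa [map_add, map_pow] using hker
        have h2 : (PadicInt.toZMod x) ^ 2 = -1 := by linear_combination this
        rw [← h2]; ring
      exact (ZMod.exists_sq_eq_neg_one_iff.mp this) hp
    · exact h
  simp only [hnorm]
  have : IsProbabilityMeasure μ := ⟨hμ⟩
  simp
end

section
/- Vanishing of tails of grouped double series used in the proof of Lemma 9: Let a : ℕ × ℕ → G satisfy 0 ≤ a_{ij} for all i, j, and suppose that for some bijection e : ℕ → ℕ × ℕ the series Σ_{k∈ℕ} a_{e(k)} converges. Then the difference Σ_{i≤n} (Σ_{j∈ℕ} a_{ij}) − Σ_{i≤n, j≤n} a_{ij} converges to 0 as n → ∞. -/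
open Filter Topology

/-! The order axioms make every finite partial sum of the nonnegative family `a` at most `s`.
Hence the square sums `Q n = Σ_{i,j≤n} a (i, j)` satisfy `T (m n) ≤ Q n ≤ s`, where `T` are the
partial sums along `e` and `m n → ∞` (the square eventually contains any finite set), so `Q n → s`. The difference in question lies
between `0` (row partial sums are below the row sums) and `s - Q n`. -/

def SeqOrderClosed (G : Type*) [LE G] [TopologicalSpace G] : Prop :=
  ∀ (u v : ℕ → G) (lu lv : G), (∀ n, u n ≤ v n) →
    Tendsto u atTop (𝓝 lu) → Tendsto v atTop (𝓝 lv) → lu ≤ lv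

def HasSqueezeProperty (G : Type*) [LE G] [Zero G] [TopologicalSpace G] : Prop :=
  ∀ (u v w : ℕ → G), (∀ n, u n ≤ v n) → (∀ n, v n ≤ w n) →
    Tendsto u atTop (𝓝 0) → Tendsto w atTop (𝓝 0) → Tendsto v atTop (𝓝 0)

section SeqOrderClosed

variable {G : Type*} [Preorder G] [TopologicalSpace G]

theorem SeqOrderClosed.le_of_tendsto_of_eventually_le (hclosed : SeqOrderClosed G)
    {u : ℕ → G} {l c : G} (hu : Tendsto u atTop (𝓝 l)) (hle : ∀ᶠ n in atTop, c ≤ u n) :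
    c ≤ l := by
  obtain ⟨N, hN⟩ := eventually_atTop.mp hle
  exact hclosed (fun _ => c) (fun n => u (n + N)) c l (fun n => hN _ (Nat.le_add_left N n))
    tendsto_const_nhds (hu.comp (tendsto_add_atTop_nat N))

theorem SeqOrderClosed.le_of_tendsto_of_forall_le (hclosed : SeqOrderClosed G)
    {u : ℕ → G} {l c : G} (hu : Tendsto u atTop (𝓝 l)) (hle : ∀ n, u n ≤ c) : l ≤ c :=
  hclosed u (fun _ => c) l c hle hu tendsto_const_nhds

variable [AddCommMonoid G] [IsOrderedAddMonoid G]

theorem SeqOrderClosed.sum_range_le_of_seriesConvTo (hclosed : SeqOrderClosed G)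
    {x : ℕ → G} {s : G} (hx : ∀ k, 0 ≤ x k) (hs : SeriesConvTo x s) (N : ℕ) :
    ∑ k ∈ Finset.range N, x k ≤ s := by
  refine hclosed.le_of_tendsto_of_eventually_le hs ?_
  filter_upwards [eventually_ge_atTop N] with n hn
  exact Finset.sum_le_sum_of_subset_of_nonneg (Finset.range_subset_range.mpr (by omega))
    fun k _ _ => hx k

theorem SeqOrderClosed.sum_le_of_seriesConvTo_comp (hclosed : SeqOrderClosed G)
    {α : Type*} {f : α → G} (hf : ∀ p, 0 ≤ f p) {e : ℕ → α} (he : Function.Bijective e)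
    {s : G} (hs : SeriesConvTo (fun k => f (e k)) s) (F : Finset α) :
    ∑ p ∈ F, f p ≤ s := by
  classical
  obtain ⟨K, hK⟩ := (F.preimage e he.1.injOn).exists_nat_subset_range
  have hF : F ⊆ (Finset.range K).image e := fun p hp => by
    obtain ⟨k, rfl⟩ := he.2 p
    exact Finset.mem_image_of_mem e (hK (Finset.mem_preimage.mpr hp))
  calc ∑ p ∈ F, f p ≤ ∑ p ∈ (Finset.range K).image e, f p :=
        Finset.sum_le_sum_of_subset_of_nonneg hF fun p _ _ => hf p
    _ = ∑ k ∈ Finset.range K, f (e k) := Finset.sum_image fun _ _ _ _ h => he.1 h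
    _ ≤ s := hclosed.sum_range_le_of_seriesConvTo (fun k => hf (e k)) hs K

end SeqOrderClosed

section OrderedGroup

variable {G : Type*} [AddCommGroup G] [Preorder G] [IsOrderedAddMonoid G] [TopologicalSpace G]
  [IsTopologicalAddGroup G]

theorem HasSqueezeProperty.tendsto_of_le_of_eventually_ge (hsq : HasSqueezeProperty G)
    {T Q : ℕ → G} {s : G} (hT : Tendsto T atTop (𝓝 s)) (hQs : ∀ n, Q n ≤ s)
    (hTQ : ∀ N, ∀ᶠ n in atTop, T N ≤ Q n) (hTQ₀ : ∀ n, T 0 ≤ Q n) :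
    Tendsto Q atTop (𝓝 s) := by
  classical
  set m : ℕ → ℕ := fun n => Nat.findGreatest (fun N => T N ≤ Q n) n
  have hm : Tendsto m atTop atTop := by
    refine tendsto_atTop.mpr fun N => ?_
    filter_upwards [hTQ N, eventually_ge_atTop N] with n hn hNn
    exact Nat.le_findGreatest hNn hn
  have hTm (n : ℕ) : T (m n) ≤ Q n :=
    Nat.findGreatest_spec (P := fun N => T N ≤ Q n) (Nat.zero_le n) (hTQ₀ n)
  have hgap : Tendsto (fun N => s - T N) atTop (𝓝 0) := by
    simpa using (tendsto_const_nhds (x := s)).sub hT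
  have := hsq (fun _ => 0) (fun n => s - Q n) (fun n => s - T (m n))
    (fun n => sub_nonneg.mpr (hQs n)) (fun n => sub_le_sub_left (hTm n) s)
    tendsto_const_nhds (hgap.comp hm)
  simpa using (tendsto_const_nhds (x := s)).sub this

theorem tendsto_sum_of_seriesConvTo_comp (hclosed : SeqOrderClosed G)
    (hsq : HasSqueezeProperty G) {α : Type*} {f : α → G} (hf : ∀ p, 0 ≤ f p)
    {e : ℕ → α} (he : Function.Bijective e) {s : G} (hs : SeriesConvTo (fun k => f (e k)) s)
    {S : ℕ → Finset α} (hS : ∀ p, ∀ᶠ n in atTop, p ∈ S n) :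
    Tendsto (fun n => ∑ p ∈ S n, f p) atTop (𝓝 s) := by
  classical
  have hT : Tendsto (fun N => ∑ k ∈ Finset.range N, f (e k)) atTop (𝓝 s) :=
    (tendsto_add_atTop_iff_nat 1).mp hs
  refine hsq.tendsto_of_le_of_eventually_ge hT
    (fun n => hclosed.sum_le_of_seriesConvTo_comp hf he hs (S n)) (fun N => ?_)
    (fun n => by simpa using Finset.sum_nonneg fun p _ => hf p)
  filter_upwards [(eventually_all_finset ((Finset.range N).image e)).mpr
    fun p _ => hS p] with n hn
  rw [← Finset.sum_image fun _ _ _ _ h => he.1 h]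
  exact Finset.sum_le_sum_of_subset_of_nonneg hn fun p _ _ => hf p

end OrderedGroup

theorem grouped_double_series_tail_general {G : Type*} [AddCommGroup G] [UniformSpace G]
    [IsUniformAddGroup G] [PartialOrder G]
    (hadd : ∀ a b c : G, a ≤ b → a + c ≤ b + c)
    (hclosed : ∀ (u v : ℕ → G) (lu lv : G), (∀ n, u n ≤ v n) →
      Tendsto u atTop (𝓝 lu) → Tendsto v atTop (𝓝 lv) → lu ≤ lv)
    (hsqueeze : ∀ (u v w : ℕ → G), (∀ n, u n ≤ v n) → (∀ n, v n ≤ w n) →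
      Tendsto u atTop (𝓝 (0 : G)) → Tendsto w atTop (𝓝 (0 : G)) →
      Tendsto v atTop (𝓝 (0 : G)))
    (a : ℕ × ℕ → G) (ha : ∀ i j, 0 ≤ a (i, j))
    (e : ℕ → ℕ × ℕ) (he : Function.Bijective e)
    (s : G) (hs : SeriesConvTo (fun k => a (e k)) s)
    (t : ℕ → G) (ht : ∀ i, SeriesConvTo (fun j => a (i, j)) (t i)) :
    Tendsto (fun n => (∑ i ∈ Finset.range (n + 1), t i) -
      ∑ i ∈ Finset.range (n + 1), ∑ j ∈ Finset.range (n + 1), a (i, j))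
      atTop (𝓝 (0 : G)) := by
  have : IsOrderedAddMonoid G := { add_le_add_left := fun a b h c => hadd a b c h }
  have hclosed : SeqOrderClosed G := hclosed
  have ha : ∀ p, 0 ≤ a p := fun p => ha p.1 p.2
  have hrow (i n : ℕ) : ∑ j ∈ Finset.range (n + 1), a (i, j) ≤ t i :=
    hclosed.sum_range_le_of_seriesConvTo (fun j => ha (i, j)) (ht i) (n + 1)
  have hrows (n : ℕ) : ∑ i ∈ Finset.range (n + 1), t i ≤ s :=
    hclosed.le_of_tendsto_of_forall_le (tendsto_finsetSum _ fun i _ => ht i) fun M => by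
      rw [← Finset.sum_product]
      exact hclosed.sum_le_of_seriesConvTo_comp ha he hs _
  have hsquare : Tendsto (fun n => ∑ p ∈ Finset.range (n + 1) ×ˢ Finset.range (n + 1), a p)
      atTop (𝓝 s) := by
    refine tendsto_sum_of_seriesConvTo_comp hclosed hsqueeze ha he hs fun p => ?_
    filter_upwards [eventually_ge_atTop (max p.1 p.2)] with n hn
    simp only [Finset.mem_product, Finset.mem_range]
    omega
  have hgap : Tendsto (fun n => s - ∑ p ∈ Finset.range (n + 1) ×ˢ Finset.range (n + 1), a p)
      atTop (𝓝 0) := by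
    simpa using (tendsto_const_nhds (x := s)).sub hsquare
  refine hsqueeze (fun _ => 0) _ _ (fun n => ?_) (fun n => ?_) tendsto_const_nhds hgap
  · exact sub_nonneg.mpr (Finset.sum_le_sum fun i _ => hrow i n)
  · rw [← Finset.sum_product]
    exact sub_le_sub_right (hrows n) _

/-- Vanishing of tails of grouped double series: if `0 ≤ a (i, j)` for all `i, j`,
the series over some enumeration `e` of `ℕ × ℕ` converges, and `t i` is the sum of
the `i`-th row series, then `Σ_{i≤n} t i − Σ_{i≤n, j≤n} a (i, j) → 0` as `n → ∞`. -/
theorem grouped_double_series_tail {G : Type*} [AddCommGroup G] [UniformSpace G]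
    [IsUniformAddGroup G] [CompleteSpace G] [T2Space G] [PartialOrder G]
    (hadd : ∀ a b c : G, a ≤ b → a + c ≤ b + c)
    (hclosed : ∀ (u v : ℕ → G) (lu lv : G), (∀ n, u n ≤ v n) →
      Tendsto u atTop (𝓝 lu) → Tendsto v atTop (𝓝 lv) → lu ≤ lv)
    (hsqueeze : ∀ (u v w : ℕ → G), (∀ n, u n ≤ v n) → (∀ n, v n ≤ w n) →
      Tendsto u atTop (𝓝 (0 : G)) → Tendsto w atTop (𝓝 (0 : G)) →
      Tendsto v atTop (𝓝 (0 : G)))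
    (a : ℕ × ℕ → G) (ha : ∀ i j, 0 ≤ a (i, j))
    (e : ℕ → ℕ × ℕ) (he : Function.Bijective e)
    (s : G) (hs : SeriesConvTo (fun k => a (e k)) s)
    (t : ℕ → G) (ht : ∀ i, SeriesConvTo (fun j => a (i, j)) (t i)) :
    Tendsto (fun n => (∑ i ∈ Finset.range (n + 1), t i) -
      ∑ i ∈ Finset.range (n + 1), ∑ j ∈ Finset.range (n + 1), a (i, j))
      atTop (𝓝 (0 : G)) :=
  grouped_double_series_tail_general hadd hclosed hsqueeze a ha e he s hs t ht
end
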